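/- (Prediction step.) Let n ≥ 1, let x̂_c ∈ ℝⁿ, E ∈ ℝ^{n×n}, z ∈ ℝⁿ with ‖z‖ ≤ 1, and set the current state x = x̂_c + E z and γ = ‖E‖. Let A₀ ∈ ℝ^{n×n}, K₂ ∈ ℝ^{n×n²}, and R_A ∈ ℝ^{n×n} with ‖R_A‖ ≤ r_A, and define Δ₂ = ((x − x̂_c) ⊗ Iₙ) ∈ ℝ^{n²×n}. Let w ∈ ℝⁿ and Q ∈ ℝ^{n×n} be positive definite with wᵀQ⁻¹w ≤ 1, and let the successor state be x⁺ = (A₀ + K₂Δ₂ + R_A)x + w; set the predicted estimate x̂⁺ = A₀ x̂_c. Suppose there exist a positive definite P⁺ ∈ ℝ^{n×n} and scalars τ₇,…,τ₁₂ ≥ 0 such that the block matrix [[−P⁺, Π],[Πᵀ, −Ψ]] is negative semidefinite, where Π = [0ₙ, A₀E, Iₙ, K₂, Iₙ, K₂, Iₙ] (column blocks of widths 1, n, n, n², n, n², n) and Ψ = diag(1 − τ₇ − τ₈ − τ₉γ²·x̂_cᵀx̂_c − τ₁₀·r_A²·x̂_cᵀx̂_c, τ₇Iₙ − τ₁₁γ²·EᵀE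 − τ₁₂·r_A²·EᵀE, τ₈Q⁻¹, τ₉I_{n²}, τ₁₀Iₙ, τ₁₁I_{n²}, τ₁₂Iₙ). Then (x⁺ − x̂⁺)ᵀ (P⁺)⁻¹ (x⁺ − x̂⁺) ≤ 1, i.e., x⁺ belongs to the ellipsoid E(x̂⁺, P⁺). -/

import Mathlib

open Matrix

/-- The spectral norm (largest singular value) of a real matrix, i.e. its operator norm
with respect to Euclidean vector norms. -/
noncomputable def matSpectralNorm {m n : Type*} [Fintype m] [Fintype n] [DecidableEq n]
    (M : Matrix m n ℝ) : ℝ :=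
  ‖LinearMap.toContinuousLinearMap (Matrix.toEuclideanLin M)‖

/-- The Euclidean norm of a real vector. -/
noncomputable def euclNorm {n : Type*} [Fintype n] (v : n → ℝ) : ℝ :=
  Real.sqrt (∑ i, v i ^ 2)

/-- The Kronecker product `ξ ⊗ Iₘ` of a column vector `ξ ∈ ℝⁿ` with the `m × m`
identity matrix, as an `nm × m` matrix. -/
def kronColId {n : Type*} (m : Type*) [DecidableEq m] (ξ : n → ℝ) : Matrix (n × m) m ℝ :=
  Matrix.of fun p j => ξ p.1 * (if p.2 = j then (1:ℝ) else 0)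

/-- Index type for the stacked uncertainty vector
`ζ = (1, z, w, Δ₇, Δ₈, Δ₉, Δ₁₀)` of the prediction step: column blocks of
widths `1, n, n, n², n, n², n`. -/
abbrev PredIdx (n : ℕ) :=
  Unit ⊕ Fin n ⊕ Fin n ⊕ (Fin n × Fin n) ⊕ Fin n ⊕ (Fin n × Fin n) ⊕ Fin n

lemma specNorm_nonneg {m n : Type*} [Fintype m] [Fintype n] [DecidableEq n]
    (M : Matrix m n ℝ) : 0 ≤ matSpectralNorm M := norm_nonneg _

lemma mulVec_dot_le {m n : Type*} [Fintype m] [Fintype n] [DecidableEq n]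
    (M : Matrix m n ℝ) (v : n → ℝ) :
    (M *ᵥ v) ⬝ᵥ (M *ᵥ v) ≤ matSpectralNorm M ^ 2 * (v ⬝ᵥ v) := by
  have h := (LinearMap.toContinuousLinearMap (Matrix.toEuclideanLin M)).le_opNorm
    ((WithLp.equiv 2 (n → ℝ)).symm v)
  have hnv : ‖(WithLp.equiv 2 (n → ℝ)).symm v‖ ^ 2 = v ⬝ᵥ v := by
    rw [EuclideanSpace.norm_eq, Real.sq_sqrt (by positivity)]
    simp [dotProduct, sq, Real.norm_eq_abs, abs_mul_abs_self]
  have hval : (LinearMap.toContinuousLinearMap (Matrix.toEuclideanLin M))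
      ((WithLp.equiv 2 (n → ℝ)).symm v) = (WithLp.equiv 2 (m → ℝ)).symm (M *ᵥ v) := by
    simp [LinearMap.toContinuousLinearMap]
  have hnMv : ‖(WithLp.equiv 2 (m → ℝ)).symm (M *ᵥ v)‖ ^ 2 = (M *ᵥ v) ⬝ᵥ (M *ᵥ v) := by
    rw [EuclideanSpace.norm_eq, Real.sq_sqrt (by positivity)]
    simp [dotProduct, sq, Real.norm_eq_abs, abs_mul_abs_self]
  rw [hval] at h
  have h2 := mul_self_le_mul_self (norm_nonneg _) h
  calc (M *ᵥ v) ⬝ᵥ (M *ᵥ v) = ‖(WithLp.equiv 2 (m → ℝ)).symm (M *ᵥ v)‖ ^ 2 := hnMv.symm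
    _ ≤ (matSpectralNorm M * ‖(WithLp.equiv 2 (n → ℝ)).symm v‖) ^ 2 := by
        rw [sq, sq]; exact h2
    _ = matSpectralNorm M ^ 2 * (v ⬝ᵥ v) := by rw [mul_pow, hnv]

lemma kron_dot {n m : Type*} [Fintype n] [Fintype m] [DecidableEq m] (ξ : n → ℝ) (v : m → ℝ) :
    (kronColId m ξ *ᵥ v) ⬝ᵥ (kronColId m ξ *ᵥ v) = (ξ ⬝ᵥ ξ) * (v ⬝ᵥ v) := by
  have h : ∀ p : n × m, (kronColId m ξ *ᵥ v) p = ξ p.1 * v p.2 := by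
    intro p
    simp [kronColId, Matrix.mulVec, dotProduct, mul_ite, Finset.sum_ite_eq]
  simp only [dotProduct, h, Fintype.sum_prod_type]
  rw [Finset.sum_mul_sum]
  congr 1; ext i; congr 1; ext j; ring

lemma dot_transpose_mul {n : ℕ} (E : Matrix (Fin n) (Fin n) ℝ) (z : Fin n → ℝ) :
    z ⬝ᵥ ((Eᵀ * E) *ᵥ z) = (E *ᵥ z) ⬝ᵥ (E *ᵥ z) := by
  rw [← Matrix.mulVec_mulVec, Matrix.dotProduct_mulVec, Matrix.vecMul_transpose]

lemma dot_self_nonneg {n : Type*} [Fintype n] (v : n → ℝ) : 0 ≤ v ⬝ᵥ v :=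
  Finset.sum_nonneg fun i _ => mul_self_nonneg _


set_option maxHeartbeats 1000000

/-- **Prediction step of the SDC set-membership filter (Theorem 2).**
If the LMI `[[−P⁺, Π], [Πᵀ, −Ψ]] ⪯ 0` is feasible with `P⁺ ≻ 0` and multipliers
`τ₇, …, τ₁₂ ≥ 0`, then the successor state `x⁺ = (A₀ + K₂ Δ₂ + R_A) x + w` lies in the
prediction ellipsoid `E(x̂⁺, P⁺)`, where `x̂⁺ = A₀ x̂_c`. -/
theorem sdc_smf_prediction_step
    (n : ℕ) (hn : 1 ≤ n)
    (xhc : Fin n → ℝ) (E : Matrix (Fin n) (Fin n) ℝ)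
    (z : Fin n → ℝ) (hz : euclNorm z ≤ 1)
    (x : Fin n → ℝ) (hx : x = xhc + E *ᵥ z)
    (A₀ : Matrix (Fin n) (Fin n) ℝ) (K₂ : Matrix (Fin n) (Fin n × Fin n) ℝ)
    (RA : Matrix (Fin n) (Fin n) ℝ) (rA : ℝ) (hRA : matSpectralNorm RA ≤ rA)
    (Δ₂ : Matrix (Fin n × Fin n) (Fin n) ℝ) (hΔ₂ : Δ₂ = kronColId (Fin n) (x - xhc))
    (w : Fin n → ℝ) (Q : Matrix (Fin n) (Fin n) ℝ) (hQ : Q.PosDef)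
    (hw : w ⬝ᵥ (Q⁻¹ *ᵥ w) ≤ 1)
    (xplus : Fin n → ℝ) (hxplus : xplus = (A₀ + K₂ * Δ₂ + RA) *ᵥ x + w)
    (xhplus : Fin n → ℝ) (hxhplus : xhplus = A₀ *ᵥ xhc)
    (Pplus : Matrix (Fin n) (Fin n) ℝ) (hPplus : Pplus.PosDef)
    (τ₇ τ₈ τ₉ τ₁₀ τ₁₁ τ₁₂ : ℝ)
    (hτ₇ : 0 ≤ τ₇) (hτ₈ : 0 ≤ τ₈) (hτ₉ : 0 ≤ τ₉)
    (hτ₁₀ : 0 ≤ τ₁₀) (hτ₁₁ : 0 ≤ τ₁₁) (hτ₁₂ : 0 ≤ τ₁₂)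
    (PiM : Matrix (Fin n) (PredIdx n) ℝ)
    (hPiM : PiM = Matrix.of fun i ζ =>
      match ζ with
      | Sum.inl _ => (0:ℝ)
      | Sum.inr (Sum.inl j) => (A₀ * E) i j
      | Sum.inr (Sum.inr (Sum.inl j)) => (1 : Matrix (Fin n) (Fin n) ℝ) i j
      | Sum.inr (Sum.inr (Sum.inr (Sum.inl j))) => K₂ i j
      | Sum.inr (Sum.inr (Sum.inr (Sum.inr (Sum.inl j)))) =>
          (1 : Matrix (Fin n) (Fin n) ℝ) i j
      | Sum.inr (Sum.inr (Sum.inr (Sum.inr (Sum.inr (Sum.inl j))))) => K₂ i j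
      | Sum.inr (Sum.inr (Sum.inr (Sum.inr (Sum.inr (Sum.inr j))))) =>
          (1 : Matrix (Fin n) (Fin n) ℝ) i j)
    (PsiM : Matrix (PredIdx n) (PredIdx n) ℝ)
    (hPsiM : PsiM = Matrix.of fun a b =>
      match a, b with
      | Sum.inl _, Sum.inl _ =>
          1 - τ₇ - τ₈ - τ₉ * matSpectralNorm E ^ 2 * (xhc ⬝ᵥ xhc)
            - τ₁₀ * rA ^ 2 * (xhc ⬝ᵥ xhc)
      | Sum.inr (Sum.inl i), Sum.inr (Sum.inl j) =>
          (τ₇ • (1 : Matrix (Fin n) (Fin n) ℝ)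
            - (τ₁₁ * matSpectralNorm E ^ 2) • (Eᵀ * E)
            - (τ₁₂ * rA ^ 2) • (Eᵀ * E)) i j
      | Sum.inr (Sum.inr (Sum.inl i)), Sum.inr (Sum.inr (Sum.inl j)) =>
          (τ₈ • Q⁻¹) i j
      | Sum.inr (Sum.inr (Sum.inr (Sum.inl i))),
          Sum.inr (Sum.inr (Sum.inr (Sum.inl j))) =>
          (τ₉ • (1 : Matrix (Fin n × Fin n) (Fin n × Fin n) ℝ)) i j
      | Sum.inr (Sum.inr (Sum.inr (Sum.inr (Sum.inl i)))),
          Sum.inr (Sum.inr (Sum.inr (Sum.inr (Sum.inl j)))) =>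
          (τ₁₀ • (1 : Matrix (Fin n) (Fin n) ℝ)) i j
      | Sum.inr (Sum.inr (Sum.inr (Sum.inr (Sum.inr (Sum.inl i))))),
          Sum.inr (Sum.inr (Sum.inr (Sum.inr (Sum.inr (Sum.inl j))))) =>
          (τ₁₁ • (1 : Matrix (Fin n × Fin n) (Fin n × Fin n) ℝ)) i j
      | Sum.inr (Sum.inr (Sum.inr (Sum.inr (Sum.inr (Sum.inr i))))),
          Sum.inr (Sum.inr (Sum.inr (Sum.inr (Sum.inr (Sum.inr j))))) =>
          (τ₁₂ • (1 : Matrix (Fin n) (Fin n) ℝ)) i j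
      | _, _ => (0:ℝ))
    (hLMI : (-(Matrix.fromBlocks (-Pplus) PiM PiMᵀ (-PsiM))).PosSemidef) :
    (xplus - xhplus) ⬝ᵥ (Pplus⁻¹ *ᵥ (xplus - xhplus)) ≤ 1 := by
  have hdet : IsUnit Pplus.det := isUnit_iff_ne_zero.mpr hPplus.det_pos.ne'
  set γ : ℝ := matSpectralNorm E with hγ
  set ξ : Fin n → ℝ := E *ᵥ z with hξ
  have hΔ₂' : Δ₂ = kronColId (Fin n) ξ := by
    rw [hΔ₂, hx, add_sub_cancel_left]
  set d₄ : (Fin n × Fin n) → ℝ := Δ₂ *ᵥ xhc with hd4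
  set d₅ : Fin n → ℝ := RA *ᵥ xhc with hd5
  set d₆ : (Fin n × Fin n) → ℝ := Δ₂ *ᵥ ξ with hd6
  set d₇ : Fin n → ℝ := RA *ᵥ ξ with hd7
  set ζ : PredIdx n → ℝ :=
    Sum.elim (fun _ => (1:ℝ))
      (Sum.elim z (Sum.elim w (Sum.elim d₄ (Sum.elim d₅ (Sum.elim d₆ d₇))))) with hζ
  set e : Fin n → ℝ := xplus - xhplus with he
  -- Claim A : PiM *ᵥ ζ = e
  have hA : PiM *ᵥ ζ = e := by
    have h1 : PiM *ᵥ ζ = (A₀ * E) *ᵥ z + w + K₂ *ᵥ d₄ + d₅ + K₂ *ᵥ d₆ + d₇ := by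
      funext i
      simp [hPiM, hζ, Matrix.mulVec, dotProduct, Fintype.sum_sum_type,
        Matrix.one_apply, ite_mul, Finset.sum_ite_eq]
      ring
    rw [h1, he, hxplus, hxhplus, hx]
    simp only [Matrix.add_mulVec, Matrix.mulVec_add, ← Matrix.mulVec_mulVec, hd4, hd5,
      hd6, hd7, hξ]
    abel
  -- the quadratic form inequality from the LMI
  set u : Fin n → ℝ := Pplus⁻¹ *ᵥ e with hu
  have hq := hLMI.dotProduct_mulVec_nonneg (Sum.elim u ζ)
  have hPu : Pplus *ᵥ u = e := by
    rw [hu, Matrix.mulVec_mulVec, Matrix.mul_nonsing_inv Pplus hdet, Matrix.one_mulVec]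
  have hgoal_eq : e ⬝ᵥ u = e ⬝ᵥ (Pplus⁻¹ *ᵥ e) := by rw [hu]
  have hq2 : e ⬝ᵥ (Pplus⁻¹ *ᵥ e) ≤ ζ ⬝ᵥ (PsiM *ᵥ ζ) := by
    have hexp : star (Sum.elim u ζ) ⬝ᵥ
        ((-(Matrix.fromBlocks (-Pplus) PiM PiMᵀ (-PsiM))) *ᵥ Sum.elim u ζ)
        = u ⬝ᵥ (Pplus *ᵥ u) - u ⬝ᵥ (PiM *ᵥ ζ) - ζ ⬝ᵥ (PiMᵀ *ᵥ u)
          + ζ ⬝ᵥ (PsiM *ᵥ ζ) := by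
      rw [show (-(Matrix.fromBlocks (-Pplus) PiM PiMᵀ (-PsiM)))
          = Matrix.fromBlocks Pplus (-PiM) (-PiMᵀ) PsiM by
        rw [Matrix.fromBlocks_neg, neg_neg, neg_neg]]
      rw [Matrix.fromBlocks_mulVec]
      simp only [star_trivial, sumElim_dotProduct_sumElim, Matrix.neg_mulVec,
        dotProduct_add, dotProduct_neg, Sum.elim_comp_inl, Sum.elim_comp_inr]
      ring
    rw [hexp] at hq
    have hPiu : ζ ⬝ᵥ (PiMᵀ *ᵥ u) = e ⬝ᵥ u := by
      rw [Matrix.dotProduct_mulVec, Matrix.vecMul_transpose, hA, dotProduct_comm]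
    rw [hPu, hA] at hq
    rw [hPiu] at hq
    have huu : u ⬝ᵥ e = e ⬝ᵥ u := dotProduct_comm _ _
    rw [huu] at hq
    rw [← hgoal_eq]
    linarith
  -- Claim B : ζ ⬝ᵥ (PsiM *ᵥ ζ) ≤ 1
  set X : ℝ := xhc ⬝ᵥ xhc with hX
  set b : ℝ := ξ ⬝ᵥ ξ with hb
  have hΨv : PsiM *ᵥ ζ = Sum.elim
      (fun _ => 1 - τ₇ - τ₈ - τ₉ * γ ^ 2 * X - τ₁₀ * rA ^ 2 * X)
      (Sum.elim ((τ₇ • (1 : Matrix (Fin n) (Fin n) ℝ)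
            - (τ₁₁ * γ ^ 2) • (Eᵀ * E) - (τ₁₂ * rA ^ 2) • (Eᵀ * E)) *ᵥ z)
        (Sum.elim ((τ₈ • Q⁻¹) *ᵥ w)
          (Sum.elim (τ₉ • d₄) (Sum.elim (τ₁₀ • d₅) (Sum.elim (τ₁₁ • d₆) (τ₁₂ • d₇)))))) := by
    funext a
    rcases a with _ | a
    · simp [hPsiM, hζ, Matrix.mulVec, dotProduct, Fintype.sum_sum_type, hX]
    rcases a with i | a
    · simp [hPsiM, hζ, Matrix.mulVec, dotProduct, Fintype.sum_sum_type]
    rcases a with i | a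
    · simp [hPsiM, hζ, Matrix.mulVec, dotProduct, Fintype.sum_sum_type]
    rcases a with i | a
    · simp [hPsiM, hζ, Matrix.mulVec, dotProduct, Fintype.sum_sum_type,
        Matrix.one_apply, ite_mul, Finset.sum_ite_eq]
    rcases a with i | a
    · simp [hPsiM, hζ, Matrix.mulVec, dotProduct, Fintype.sum_sum_type,
        Matrix.one_apply, ite_mul, Finset.sum_ite_eq]
    rcases a with i | i
    · simp [hPsiM, hζ, Matrix.mulVec, dotProduct, Fintype.sum_sum_type,
        Matrix.one_apply, ite_mul, Finset.sum_ite_eq]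
    · simp [hPsiM, hζ, Matrix.mulVec, dotProduct, Fintype.sum_sum_type,
        Matrix.one_apply, ite_mul, Finset.sum_ite_eq]
  have hform : ζ ⬝ᵥ (PsiM *ᵥ ζ) =
      (1 - τ₇ - τ₈ - τ₉ * γ ^ 2 * X - τ₁₀ * rA ^ 2 * X)
      + (τ₇ * (z ⬝ᵥ z) - (τ₁₁ * γ ^ 2) * b - (τ₁₂ * rA ^ 2) * b)
      + τ₈ * (w ⬝ᵥ (Q⁻¹ *ᵥ w)) + τ₉ * (d₄ ⬝ᵥ d₄) + τ₁₀ * (d₅ ⬝ᵥ d₅)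
      + τ₁₁ * (d₆ ⬝ᵥ d₆) + τ₁₂ * (d₇ ⬝ᵥ d₇) := by
    rw [hΨv, hζ]
    simp only [sumElim_dotProduct_sumElim]
    have hzblock : z ⬝ᵥ ((τ₇ • (1 : Matrix (Fin n) (Fin n) ℝ)
        - (τ₁₁ * γ ^ 2) • (Eᵀ * E) - (τ₁₂ * rA ^ 2) • (Eᵀ * E)) *ᵥ z)
        = τ₇ * (z ⬝ᵥ z) - (τ₁₁ * γ ^ 2) * b - (τ₁₂ * rA ^ 2) * b := by
      simp only [Matrix.sub_mulVec, Matrix.smul_mulVec, Matrix.one_mulVec,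
        dotProduct_sub, dotProduct_smul, smul_eq_mul, dot_transpose_mul, hb, hξ]
    rw [hzblock]
    simp only [Matrix.smul_mulVec, dotProduct_smul, smul_eq_mul]
    simp only [dotProduct, Fintype.sum_prod_type, ← Finset.mul_sum, pow_two,
      Finset.univ_unique, Finset.sum_singleton, one_mul]
    ring
  -- norm bounds
  have hz2 : z ⬝ᵥ z ≤ 1 := by
    have h0 : (0:ℝ) ≤ ∑ i, z i ^ 2 := by positivity
    have hz' : Real.sqrt (∑ i, z i ^ 2) ≤ 1 := hz
    have h1 : ∑ i, z i ^ 2 ≤ 1 := by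
      nlinarith [Real.sq_sqrt h0, Real.sqrt_nonneg (∑ i, z i ^ 2)]
    have h2 : z ⬝ᵥ z = ∑ i, z i ^ 2 := by
      simp [dotProduct, pow_two]
    linarith
  have hz0 : 0 ≤ z ⬝ᵥ z := dot_self_nonneg z
  have hX0 : 0 ≤ X := dot_self_nonneg xhc
  have hb0 : 0 ≤ b := dot_self_nonneg ξ
  have hγ0 : 0 ≤ γ := specNorm_nonneg E
  have hrA0 : 0 ≤ rA := le_trans (specNorm_nonneg RA) hRA
  have hbγ : b ≤ γ ^ 2 := by
    have h1 := mulVec_dot_le E z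
    have h2 : γ ^ 2 * (z ⬝ᵥ z) ≤ γ ^ 2 * 1 :=
      mul_le_mul_of_nonneg_left hz2 (by positivity)
    rw [hb, hξ]
    calc (E *ᵥ z) ⬝ᵥ (E *ᵥ z) ≤ γ ^ 2 * (z ⬝ᵥ z) := h1
      _ ≤ γ ^ 2 := by linarith
  have hRAsq : matSpectralNorm RA ^ 2 ≤ rA ^ 2 :=
    pow_le_pow_left₀ (specNorm_nonneg RA) hRA 2
  have hd4v : d₄ ⬝ᵥ d₄ = b * X := by
    rw [hd4, hΔ₂', kron_dot]
  have hd6v : d₆ ⬝ᵥ d₆ = b * b := by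
    rw [hd6, hΔ₂', kron_dot]
  have hd5v : d₅ ⬝ᵥ d₅ ≤ rA ^ 2 * X := by
    calc d₅ ⬝ᵥ d₅ ≤ matSpectralNorm RA ^ 2 * X := mulVec_dot_le RA xhc
      _ ≤ rA ^ 2 * X := mul_le_mul_of_nonneg_right hRAsq hX0
  have hd7v : d₇ ⬝ᵥ d₇ ≤ rA ^ 2 * b := by
    calc d₇ ⬝ᵥ d₇ ≤ matSpectralNorm RA ^ 2 * b := mulVec_dot_le RA ξ
      _ ≤ rA ^ 2 * b := mul_le_mul_of_nonneg_right hRAsq hb0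
  -- combine
  have h3 : 0 ≤ τ₉ * (γ ^ 2 * X - b * X) :=
    mul_nonneg hτ₉ (by nlinarith)
  have h5 : 0 ≤ τ₁₁ * (γ ^ 2 * b - b * b) :=
    mul_nonneg hτ₁₁ (by nlinarith)
  have h4 : τ₁₀ * (d₅ ⬝ᵥ d₅) ≤ τ₁₀ * (rA ^ 2 * X) :=
    mul_le_mul_of_nonneg_left hd5v hτ₁₀
  have h6 : τ₁₂ * (d₇ ⬝ᵥ d₇) ≤ τ₁₂ * (rA ^ 2 * b) :=
    mul_le_mul_of_nonneg_left hd7v hτ₁₂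
  have h7 : τ₇ * (z ⬝ᵥ z) ≤ τ₇ := by
    calc τ₇ * (z ⬝ᵥ z) ≤ τ₇ * 1 := mul_le_mul_of_nonneg_left hz2 hτ₇
      _ = τ₇ := mul_one _
  have h8 : τ₈ * (w ⬝ᵥ (Q⁻¹ *ᵥ w)) ≤ τ₈ := by
    calc τ₈ * (w ⬝ᵥ (Q⁻¹ *ᵥ w)) ≤ τ₈ * 1 := mul_le_mul_of_nonneg_left hw hτ₈
      _ = τ₈ := mul_one _
  have hB : ζ ⬝ᵥ (PsiM *ᵥ ζ) ≤ 1 := by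
    rw [hform, hd4v, hd6v]
    linarith [h3, h4, h5, h6, h7, h8]
  linarith [hq2, hB]
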